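/- arXiv:2001.06343 — 2 statements merged into one kernel-verified Lean document; each statement's English description precedes it below -/
import Mathlib

section
/- Let a, b, c be affinely independent points in the Euclidean plane, let m denote the midpoint of the segment ab and n the midpoint of the segment bc. Then the three subtriangles of the blue refinement cover the triangle and have pairwise disjoint interiors: convexHull{a, m, c} ∪ convexHull{m, b, n} ∪ convexHull{n, c, m} = convexHull{a, b, c}, and the topological interiors of convexHull{a, m, c}, convexHull{m, b, n}, and convexHull{n, c, m} are pairwise disjoint. -/
/-!
The blue refinement is two successive cevian splits: `abc` is cut along `cm` into `amc` and
`mbc`, and `mbc` along `mn` into `mbn` and `ncm`. A cevian split covers the triangle because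
`conv {a, b, c}` is the join of `c` with `[a, b]` and `[a, b] = [a, p] ∪ [p, b]`.

For the interiors, each pair of subtriangles lies on opposite closed sides of a line: with
barycentric coordinates `(x, y, z)` relative to `a, b, c`, the line `y = x` through `c` and `m`,
or the line `y = 1/2` through `m` and `n`. A nonconstant affine functional is an open map, so the
interior of a set lying in a closed half-plane lies in the open half-plane.
-/

open Set

section Segment

variable {𝕜 E : Type*} [Field 𝕜] [LinearOrder 𝕜] [IsStrictOrderedRing 𝕜]
  [AddCommGroup E] [Module 𝕜 E]

theorem segment_subset_union_of_mem {a b p : E} (hp : p ∈ segment 𝕜 a b) :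
    segment 𝕜 a b ⊆ segment 𝕜 a p ∪ segment 𝕜 p b := by
  have hp_line : p ∈ range (AffineMap.lineMap a b : 𝕜 → E) := by
    rw [segment_eq_image_lineMap] at hp
    exact image_subset_range _ _ hp
  rw [← insert_endpoints_openSegment]
  rintro q (rfl | rfl | hq)
  · exact .inl (left_mem_segment 𝕜 _ _)
  · exact .inr (right_mem_segment 𝕜 _ _)
  · rcases openSegment_subset_union a b hp_line hq with rfl | hq | hq
    · exact .inl (right_mem_segment 𝕜 _ _)
    · exact .inl (openSegment_subset_segment 𝕜 _ _ hq)
    · exact .inr (openSegment_subset_segment 𝕜 _ _ hq)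

theorem convexHull_triple_eq_convexJoin (a b c : E) :
    convexHull 𝕜 {a, b, c} = convexJoin 𝕜 {c} (segment 𝕜 a b) := by
  rw [pair_comm b c, insert_comm a c, convexHull_insert (insert_nonempty _ _), convexHull_pair]

theorem convexHull_triple_eq_union_of_mem_segment {a b c p : E} (hp : p ∈ segment 𝕜 a b) :
    convexHull 𝕜 {a, p, c} ∪ convexHull 𝕜 {p, b, c} = convexHull 𝕜 {a, b, c} := by
  simp only [convexHull_triple_eq_convexJoin, ← convexJoin_union_right]
  refine (convexJoin_mono_right ?_).antisymm
    (convexJoin_mono_right (segment_subset_union_of_mem hp))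
  exact union_subset ((convex_segment a b).segment_subset (left_mem_segment 𝕜 a b) hp)
    ((convex_segment a b).segment_subset hp (right_mem_segment 𝕜 a b))

theorem union_convexHull_blue_refinement_eq_convexHull [Invertible (2 : 𝕜)] (a b c : E) :
    convexHull 𝕜 {a, midpoint 𝕜 a b, c} ∪
        convexHull 𝕜 {midpoint 𝕜 a b, b, midpoint 𝕜 b c} ∪
        convexHull 𝕜 {midpoint 𝕜 b c, c, midpoint 𝕜 a b} =
      convexHull 𝕜 {a, b, c} := by
  have rotate (p q r : E) : ({p, q, r} : Set E) = {q, r, p} := by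
    rw [insert_comm, pair_comm]
  rw [union_assoc, rotate (midpoint 𝕜 a b) b,
    convexHull_triple_eq_union_of_mem_segment (midpoint_mem_segment b c),
    ← rotate (midpoint 𝕜 a b) b c,
    convexHull_triple_eq_union_of_mem_segment (midpoint_mem_segment a b)]

end Segment

theorem IsOpenMap.disjoint_interior_of_le_of_ge {X : Type*} [TopologicalSpace X] {f : X → ℝ}
    (hf : IsOpenMap f) {s t : Set X} {r : ℝ} (hs : s ⊆ {x | f x ≤ r})
    (ht : t ⊆ {x | r ≤ f x}) : Disjoint (interior s) (interior t) := by
  refine disjoint_left.2 fun x hxs hxt => ?_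
  have hlt : f x ∈ interior (Iic r) :=
    interior_mono (image_subset_iff.2 hs) (hf.image_interior_subset s ⟨x, hxs, rfl⟩)
  have hgt : f x ∈ interior (Ici r) :=
    interior_mono (image_subset_iff.2 ht) (hf.image_interior_subset t ⟨x, hxt, rfl⟩)
  rw [interior_Iic, mem_Iio] at hlt
  rw [interior_Ici, mem_Ioi] at hgt
  exact lt_asymm hlt hgt

theorem AffineMap.disjoint_interior_convexHull_of_le_of_ge {E : Type*} [AddCommGroup E]
    [Module ℝ E] [TopologicalSpace E] (f : E →ᵃ[ℝ] ℝ) (hf : IsOpenMap f) {s t : Set E} {r : ℝ}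
    (hs : ∀ x ∈ s, f x ≤ r) (ht : ∀ x ∈ t, r ≤ f x) :
    Disjoint (interior (convexHull ℝ s)) (interior (convexHull ℝ t)) :=
  hf.disjoint_interior_of_le_of_ge (convexHull_min hs ((convex_Iic r).affine_preimage f))
    (convexHull_min ht ((convex_Ici r).affine_preimage f))

theorem AffineMap.isOpenMap_of_apply_ne {E : Type*} [NormedAddCommGroup E] [NormedSpace ℝ E]
    [FiniteDimensional ℝ E] (f : E →ᵃ[ℝ] ℝ) {a b : E} (hab : f a ≠ f b) : IsOpenMap f := by
  have hlinear : f.linear ≠ 0 := fun h0 => hab <| by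
    have hba := f.linearMap_vsub b a
    rw [h0, LinearMap.zero_apply, vsub_eq_sub, eq_comm, sub_eq_zero] at hba
    exact hba.symm
  exact AffineMap.isOpenMap_linear_iff.mp
    (f.linear.isOpenMap_of_finiteDimensional (LinearMap.surjective_of_ne_zero hlinear))

/-- The three subtriangles of the blue refinement cover the triangle and have
pairwise disjoint topological interiors. -/
theorem blue_refinement_cover_disjoint
    (a b c : EuclideanSpace ℝ (Fin 2))
    (h : AffineIndependent ℝ ![a, b, c]) :
    convexHull ℝ {a, midpoint ℝ a b, c} ∪
        convexHull ℝ {midpoint ℝ a b, b, midpoint ℝ b c} ∪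
        convexHull ℝ {midpoint ℝ b c, c, midpoint ℝ a b} =
      convexHull ℝ {a, b, c} ∧
    Disjoint (interior (convexHull ℝ {a, midpoint ℝ a b, c}))
      (interior (convexHull ℝ {midpoint ℝ a b, b, midpoint ℝ b c})) ∧
    Disjoint (interior (convexHull ℝ {a, midpoint ℝ a b, c}))
      (interior (convexHull ℝ {midpoint ℝ b c, c, midpoint ℝ a b})) ∧
    Disjoint (interior (convexHull ℝ {midpoint ℝ a b, b, midpoint ℝ b c}))
      (interior (convexHull ℝ {midpoint ℝ b c, c, midpoint ℝ a b})) := by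
  refine ⟨union_convexHull_blue_refinement_eq_convexHull a b c, ?_⟩
  let B : AffineBasis (Fin 3) ℝ (EuclideanSpace ℝ (Fin 2)) :=
    ⟨![a, b, c], h, h.affineSpan_eq_top_iff_card_eq_finrank_add_one.mpr (by simp)⟩
  let x := B.coord 0
  let y := B.coord 1
  obtain ⟨hxa, hxb, hxc⟩ : x a = 1 ∧ x b = 0 ∧ x c = 0 :=
    ⟨B.coord_apply_eq 0, B.coord_apply_ne (j := 1) (by decide),
      B.coord_apply_ne (j := 2) (by decide)⟩
  obtain ⟨hya, hyb, hyc⟩ : y a = 0 ∧ y b = 1 ∧ y c = 0 :=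
    ⟨B.coord_apply_ne (j := 0) (by decide), B.coord_apply_eq 1,
      B.coord_apply_ne (j := 2) (by decide)⟩
  have hy_open : IsOpenMap y := isOpenMap_barycentric_coord B 1
  have hyx_open : IsOpenMap (y - x) :=
    (y - x).isOpenMap_of_apply_ne (a := a) (b := b) (by norm_num [hxa, hxb, hya, hyb])
  refine ⟨(y - x).disjoint_interior_convexHull_of_le_of_ge hyx_open (r := 0) ?_ ?_,
    (y - x).disjoint_interior_convexHull_of_le_of_ge hyx_open (r := 0) ?_ ?_,
    (y.disjoint_interior_convexHull_of_le_of_ge hy_open (r := 1 / 2) ?_ ?_).symm⟩ <;>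
  simp only [forall_mem_insert, mem_singleton_iff, forall_eq, AffineMap.map_midpoint,
    AffineMap.coe_sub, Pi.sub_apply, hxa, hxb, hxc, hya, hyb, hyc] <;>
  norm_num [midpoint_eq_smul_add]
end

section
/- Let a, b, c be affinely independent points in the Euclidean plane, let m denote the midpoint of the segment ab and n the midpoint of the segment bc. Then the blue refinement of (a, b, c) coincides with the result of applying two successive green refinements: the family of vertex sets of the three blue subtriangles, {{a, m, c}, {m, b, n}, {n, c, m}}, equals the family obtained by first green-refining (a, b, c) at the midpoint m of ab into (a, m, c) and (m, b, c), and then green-refining the child (m, b, c) at the midpoint n of its edge bc into (m, b, n)... (n, c, m); equivalently, convexHull{m, b, n} ∪ convexHull{n, c, m} = convexHull{m, b, c} and convexHull{a, m, c} ∪ convexHull{m, b, c} = convexHull{a, b, c}, with the interiors of all three blue subtriangles contained in the interior of convexHull{a, b, c}. (A blue pattern arises from two subsequent bisections, so removing a blue pattern can be realized as a two-step removal of green patterns.) -/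
open Set AffineMap

variable {𝕜 E : Type*} [Field 𝕜] [LinearOrder 𝕜] [IsStrictOrderedRing 𝕜]
  [AddCommGroup E] [Module 𝕜 E]

/-- Pull the segment back along `lineMap p q` to `[0, s] ∪ [s, 1] = [0, 1]`. -/
theorem segment_eq_union_segment {p q z : E} (hz : z ∈ segment 𝕜 p q) :
    segment 𝕜 p q = segment 𝕜 p z ∪ segment 𝕜 z q := by
  rw [segment_eq_image_lineMap] at hz
  obtain ⟨s, ⟨hs0, hs1⟩, rfl⟩ := hz
  calc segment 𝕜 p q = lineMap p q '' segment 𝕜 (0 : 𝕜) 1 := by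
        rw [image_segment, lineMap_apply_zero, lineMap_apply_one]
    _ = lineMap p q '' (segment 𝕜 0 s ∪ segment 𝕜 s 1) := by
        rw [segment_eq_Icc zero_le_one, segment_eq_Icc hs0, segment_eq_Icc hs1,
          Icc_union_Icc_eq_Icc hs0 hs1]
    _ = _ := by rw [image_union, image_segment, image_segment, lineMap_apply_zero,
        lineMap_apply_one]

theorem convexHull_union_convexHull_of_mem_segment {p q z : E} (r : E)
    (hz : z ∈ segment 𝕜 p q) :
    convexHull 𝕜 {p, z, r} ∪ convexHull 𝕜 {z, q, r} = convexHull 𝕜 {p, q, r} := by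
  simp only [insert_comm _ r, pair_comm _ r]
  rw [convexHull_insert (insert_nonempty _ _), convexHull_insert (insert_nonempty _ _),
    convexHull_insert (insert_nonempty _ _), convexHull_pair, convexHull_pair, convexHull_pair,
    ← convexJoin_union_right, ← segment_eq_union_segment hz]

theorem blue_refinement_two_greens_general
    (a b c m n : EuclideanSpace ℝ (Fin 2))
    (hm : m = midpoint ℝ a b) (hn : n = midpoint ℝ b c) :
    ({{a, m, c}, {m, b, n}, {n, c, m}} : Set (Set (EuclideanSpace ℝ (Fin 2)))) =
      {{a, m, c}} ∪ {{b, n, m}, {n, c, m}} ∧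
    convexHull ℝ {m, b, n} ∪ convexHull ℝ {n, c, m} = convexHull ℝ {m, b, c} ∧
    convexHull ℝ {a, m, c} ∪ convexHull ℝ {m, b, c} = convexHull ℝ {a, b, c} ∧
    interior (convexHull ℝ {a, m, c}) ⊆ interior (convexHull ℝ {a, b, c}) ∧
    interior (convexHull ℝ {m, b, n}) ⊆ interior (convexHull ℝ {a, b, c}) ∧
    interior (convexHull ℝ {n, c, m}) ⊆ interior (convexHull ℝ {a, b, c}) := by
  have hmb : ({m, b, n} : Set (EuclideanSpace ℝ (Fin 2))) = {b, n, m} := by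
    rw [insert_comm, pair_comm]
  have hfirst : convexHull ℝ {a, m, c} ∪ convexHull ℝ {m, b, c} = convexHull ℝ {a, b, c} :=
    convexHull_union_convexHull_of_mem_segment c (hm ▸ midpoint_mem_segment a b)
  have hsecond : convexHull ℝ {m, b, n} ∪ convexHull ℝ {n, c, m} = convexHull ℝ {m, b, c} := by
    rw [hmb, insert_comm m, pair_comm m]
    exact convexHull_union_convexHull_of_mem_segment m (hn ▸ midpoint_mem_segment b c)
  have hmbc : convexHull ℝ {m, b, c} ⊆ convexHull ℝ {a, b, c} := hfirst ▸ subset_union_right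
  refine ⟨by rw [hmb, singleton_union], hsecond, hfirst,
    interior_mono (hfirst ▸ subset_union_left), ?_, ?_⟩
  · exact interior_mono ((hsecond ▸ subset_union_left).trans hmbc)
  · exact interior_mono ((hsecond ▸ subset_union_right).trans hmbc)

/-- A blue refinement coincides with the result of two successive green
refinements: the family of vertex sets of the three blue subtriangles equals
the family obtained by first green-refining (a, b, c) at the midpoint m of ab
and then green-refining the child (m, b, c) at the midpoint n of bc;
equivalently, the two finer subtriangles reunite to the intermediate green
child and the green children reunite to the original triangle, with the
interiors of all three blue subtriangles contained in the interior of the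
original triangle. -/
theorem blue_refinement_two_greens
    (a b c m n : EuclideanSpace ℝ (Fin 2))
    (h : AffineIndependent ℝ ![a, b, c])
    (hm : m = midpoint ℝ a b) (hn : n = midpoint ℝ b c) :
    ({{a, m, c}, {m, b, n}, {n, c, m}} : Set (Set (EuclideanSpace ℝ (Fin 2)))) =
      {{a, m, c}} ∪ {{b, n, m}, {n, c, m}} ∧
    convexHull ℝ {m, b, n} ∪ convexHull ℝ {n, c, m} = convexHull ℝ {m, b, c} ∧
    convexHull ℝ {a, m, c} ∪ convexHull ℝ {m, b, c} = convexHull ℝ {a, b, c} ∧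
    interior (convexHull ℝ {a, m, c}) ⊆ interior (convexHull ℝ {a, b, c}) ∧
    interior (convexHull ℝ {m, b, n}) ⊆ interior (convexHull ℝ {a, b, c}) ∧
    interior (convexHull ℝ {n, c, m}) ⊆ interior (convexHull ℝ {a, b, c}) :=
  blue_refinement_two_greens_general a b c m n hm hn
end
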